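/- Let G be a graph with vertex set {v_1, ..., v_n}, and let G' be the split graph with vertex set Y ∪ Z where Y = {y_1,...,y_n} is a clique, Z = {z_1,...,z_n} is an independent set, and y_j is adjacent to z_i if and only if v_j belongs to the closed neighborhood N[v_i] in G. Then G has an irredundant set of size k if and only if G' has a pair of perfectly matched sets of size k. -/

import Mathlib

/-- `(A, B)` is a pair of perfectly matched sets in `G`. -/
def IsPMS {V : Type*} (G : SimpleGraph V) (A B : Finset V) : Prop :=
  Disjoint A B ∧ (∀ a ∈ A, ∃! b, b ∈ B ∧ G.Adj a b) ∧ (∀ b ∈ B, ∃! a, a ∈ A ∧ G.Adj b a)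

/-- `I` is an irredundant set in `G`: every `v ∈ I` has a private closed neighbor `p`,
i.e. `p ∈ N[v]` and `N[p] ∩ I = {v}`. -/
def Irredundant {V : Type*} (G : SimpleGraph V) (I : Finset V) : Prop :=
  ∀ v ∈ I, ∃ p, (p = v ∨ G.Adj v p) ∧ ∀ u ∈ I, (u = p ∨ G.Adj u p) → u = v

/-- The split graph `G'` of the reduction: vertex set `Y ⊕ Z` with two copies of `V(G)`,
`Y` (the left summand) a clique, `Z` (the right summand) independent, and `y_j` adjacent
to `z_i` iff `v_j ∈ N[v_i]` in `G`. -/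
def splitReduction {V : Type*} (G : SimpleGraph V) : SimpleGraph (V ⊕ V) :=
  SimpleGraph.fromRel (fun x y =>
    match x, y with
    | Sum.inl _, Sum.inl _ => True
    | Sum.inl j, Sum.inr i => j = i ∨ G.Adj j i
    | _, _ => False)

/-!
If `p` picks a private closed neighbour for each vertex of an irredundant set `I`, then the
copies `y_{p(v)}` and `z_v` (`v ∈ I`) are perfectly matched, since `z_u ∼ y_{p(v)}` means
`u ∈ N[p(v)]`. Conversely, in a perfectly matched pair `(A, B)` the partner of each `z_v ∈ A`
is some `y_p` (as `Z` is independent), and `p` is a private closed neighbour of `v` in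
`{v | z_v ∈ A}`. This settles the case where one side lies in `Z`; otherwise both sides meet
the clique `Y`, which forces `|A| = 1`, realised by any singleton irredundant set.
-/

open Finset Sum

namespace IsPMS

variable {V : Type*} {G : SimpleGraph V} {A B : Finset V}

lemma symm (h : IsPMS G A B) : IsPMS G B A := ⟨h.1.symm, h.2.2, h.2.1⟩

lemma eq_of_adj (h : IsPMS G A B) {b a a' : V} (hb : b ∈ B) (ha : a ∈ A) (ha' : a' ∈ A)
    (hab : G.Adj b a) (hab' : G.Adj b a') : a = a' :=
  (h.2.2 b hb).unique ⟨ha, hab⟩ ⟨ha', hab'⟩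

end IsPMS

lemma Irredundant.singleton {V : Type*} (G : SimpleGraph V) (v : V) : Irredundant G {v} := by
  intro w hw
  exact ⟨w, Or.inl rfl, fun u hu _ => (mem_singleton.1 hu).trans (mem_singleton.1 hw).symm⟩

namespace splitReduction

variable {V : Type*} (G : SimpleGraph V)

lemma adj_inl_inl {a b : V} : (splitReduction G).Adj (inl a) (inl b) ↔ a ≠ b := by
  simp [splitReduction]

lemma adj_inl_inr {j i : V} : (splitReduction G).Adj (inl j) (inr i) ↔ i = j ∨ G.Adj i j := by
  simp [splitReduction, eq_comm, G.adj_comm]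

lemma adj_inr_inl {i j : V} : (splitReduction G).Adj (inr i) (inl j) ↔ i = j ∨ G.Adj i j := by
  rw [SimpleGraph.adj_comm, adj_inl_inr]

lemma not_adj_inr_inr {a b : V} : ¬ (splitReduction G).Adj (inr a) (inr b) := by
  simp [splitReduction]

variable {G}

lemma exists_isPMS_of_irredundant {I : Finset V} (hI : Irredundant G I) :
    ∃ A B : Finset (V ⊕ V), IsPMS (splitReduction G) A B ∧ #A = #I ∧ #B = #I := by
  classical
  choose! p hp_nbr hp_private using hI
  have hp_inj : Set.InjOn p I := fun u hu v hv huv =>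
    hp_private v hv u hu (huv ▸ (hp_nbr u hu).imp_left Eq.symm)
  refine ⟨(I.image p).map .inl, I.map .inr, ⟨disjoint_map_inl_map_inr _ _, ?_, ?_⟩, ?_, card_map _⟩
  · simp only [mem_map, mem_image, Function.Embedding.inl_apply, Function.Embedding.inr_apply]
    rintro _ ⟨_, ⟨v, hv, rfl⟩, rfl⟩
    refine ⟨inr v, ⟨⟨v, hv, rfl⟩, (adj_inl_inr G).2 ((hp_nbr v hv).imp_left Eq.symm)⟩, ?_⟩
    rintro _ ⟨⟨u, hu, rfl⟩, hadj⟩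
    rw [hp_private v hv u hu ((adj_inl_inr G).1 hadj)]
  · simp only [mem_map, mem_image, Function.Embedding.inl_apply, Function.Embedding.inr_apply]
    rintro _ ⟨v, hv, rfl⟩
    refine ⟨inl (p v), ⟨⟨p v, ⟨v, hv, rfl⟩, rfl⟩,
      (adj_inr_inl G).2 ((hp_nbr v hv).imp_left Eq.symm)⟩, ?_⟩
    rintro _ ⟨⟨_, ⟨u, hu, rfl⟩, rfl⟩, hadj⟩
    rw [hp_private u hu v hv ((adj_inr_inl G).1 hadj)]
  · rw [card_map, card_image_of_injOn hp_inj]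

lemma irredundant_toRight {A B : Finset (V ⊕ V)} (h : IsPMS (splitReduction G) A B) :
    Irredundant G A.toRight := by
  intro v hv
  rw [mem_toRight] at hv
  obtain ⟨b, ⟨hb, hvb⟩, -⟩ := h.2.1 _ hv
  obtain p | w := b
  · refine ⟨p, ((adj_inr_inl G).1 hvb).imp_left Eq.symm, fun u hu hup => ?_⟩
    rw [mem_toRight] at hu
    exact inr_injective (h.eq_of_adj hb hu hv ((adj_inl_inr G).2 hup) hvb.symm)
  · exact absurd hvb (not_adj_inr_inr G)

lemma eq_singleton_of_inl_mem {A B : Finset (V ⊕ V)} (h : IsPMS (splitReduction G) A B)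
    {j i : V} (hj : inl j ∈ A) (hi : inl i ∈ B) : A = {inl j} := by
  have hY : ∀ {a b}, inl a ∈ A → inl b ∈ B → (splitReduction G).Adj (inl b) (inl a) :=
    fun ha hb => (adj_inl_inl G).2 fun hba =>
      disjoint_left.1 h.1 ha (by rwa [← hba])
  refine eq_singleton_iff_unique_mem.2 ⟨hj, fun a ha => ?_⟩
  -- Some `y ∈ Y ∩ B` is adjacent to `a`: `y_i` if `a ∈ Y`, the partner of `a` if `a ∈ Z`.
  obtain ⟨y, hy, hya⟩ : ∃ y, inl y ∈ B ∧ (splitReduction G).Adj (inl y) a := by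
    obtain a | v := a
    · exact ⟨i, hi, hY ha hi⟩
    obtain ⟨b, ⟨hb, hvb⟩, -⟩ := h.2.1 _ ha
    obtain y | w := b
    · exact ⟨y, hb, hvb.symm⟩
    · exact absurd hvb (not_adj_inr_inr G)
  exact h.eq_of_adj hy ha hj hya (hY hj hy)

end splitReduction

theorem irredundant_iff_pms_split_general {V : Type*} (G : SimpleGraph V) (k : ℕ) :
    (∃ I : Finset V, I.card = k ∧ Irredundant G I) ↔
    (∃ A B : Finset (V ⊕ V), IsPMS (splitReduction G) A B ∧ A.card = k ∧ B.card = k) := by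
  constructor
  · rintro ⟨I, rfl, hI⟩
    exact splitReduction.exists_isPMS_of_irredundant hI
  · rintro ⟨A, B, h, rfl, hB⟩
    have card_toRight {C : Finset (V ⊕ V)} (hC : C.toLeft = ∅) : #C.toRight = #C := by
      rw [← card_toLeft_add_card_toRight, hC, card_empty, zero_add]
    by_cases hA : A.toLeft = ∅
    · exact ⟨_, card_toRight hA, splitReduction.irredundant_toRight h⟩
    by_cases hB' : B.toLeft = ∅
    · exact ⟨_, (card_toRight hB').trans hB, splitReduction.irredundant_toRight h.symm⟩
    obtain ⟨j, hj⟩ := nonempty_iff_ne_empty.2 hA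
    obtain ⟨i, hi⟩ := nonempty_iff_ne_empty.2 hB'
    rw [splitReduction.eq_singleton_of_inl_mem h (mem_toLeft.1 hj) (mem_toLeft.1 hi)]
    exact ⟨{j}, rfl, Irredundant.singleton G j⟩

/-- `G` has an irredundant set of size `k` iff the split graph `G'` of the reduction has a
pair of perfectly matched sets of size `k`. -/
theorem irredundant_iff_pms_split {V : Type*} [Fintype V] [DecidableEq V]
    (G : SimpleGraph V) (k : ℕ) :
    (∃ I : Finset V, I.card = k ∧ Irredundant G I) ↔
    (∃ A B : Finset (V ⊕ V), IsPMS (splitReduction G) A B ∧ A.card = k ∧ B.card = k) :=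
  irredundant_iff_pms_split_general G k
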